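/- Assume γ : [0,∞) → [0,1] satisfies γ(nτ) → γ* ∈ (0,1] as n → ∞. Then every solution V of the impulsive vegetation system with initial condition in [0,1] satisfies max_{t ∈ [nτ,(n+1)τ)} |V(t) - V_per(t)| → 0 as n → ∞, where V_per(t) = 1 - γ* e^{-r(t-nτ)} / (1 - (1-γ*)e^{-rτ}) on [nτ,(n+1)τ). -/

import Mathlib

open Set Filter Topology

/-- The `τ`-periodic limit vegetation profile:
`V_per(t) = 1 - γ* e^{-r(t-nτ)} / (1-(1-γ*)e^{-rτ})` on `[nτ,(n+1)τ)`. -/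
noncomputable def Vper (r τ γstar : ℝ) (t : ℝ) : ℝ :=
  1 - γstar * Real.exp (-r * (t - (⌊t / τ⌋ : ℝ) * τ))
    / (1 - (1 - γstar) * Real.exp (-r * τ))

/-- Solution of the impulsive vegetation system `V' = r(1-V)` off impulse
times, with jumps `V(nτ⁺) = (1-γ(nτ)) V(nτ⁻)` for `n ≥ 1`, taken
right-continuous at the impulse times, with initial value `V₀`. -/
def IsImpulsiveVegSol (r τ : ℝ) (γ : ℝ → ℝ) (V₀ : ℝ) (V : ℝ → ℝ) : Prop :=
  V 0 = V₀ ∧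
  ContinuousWithinAt V (Ici 0) 0 ∧
  (∀ n : ℕ, ∀ t ∈ Ioo ((n : ℝ) * τ) ((n + 1 : ℝ) * τ), HasDerivAt V (r * (1 - V t)) t) ∧
  (∀ n : ℕ, 1 ≤ n →
    (Tendsto V (𝓝[>] ((n : ℝ) * τ)) (𝓝 (V ((n : ℝ) * τ)))) ∧
    ∃ Lm : ℝ, Tendsto V (𝓝[<] ((n : ℝ) * τ)) (𝓝 Lm) ∧
      V ((n : ℝ) * τ) = (1 - γ ((n : ℝ) * τ)) * Lm) ∧
  (∀ t : ℝ, 0 ≤ t → V t ∈ Icc (0 : ℝ) 1)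

private lemma geom_rec_tendsto_zero {q : ℝ} (hq0 : 0 ≤ q) (hq1 : q < 1)
    {a b : ℕ → ℝ} (ha : ∀ n, 0 ≤ a n)
    (hrec : ∀ n, a (n + 1) ≤ q * a n + b n)
    (hb : Tendsto b atTop (𝓝 0)) :
    Tendsto a atTop (𝓝 0) := by
  rw [Metric.tendsto_atTop]
  intro ε hε
  have h1q : 0 < 1 - q := by linarith
  have hδ : 0 < ε * (1 - q) / 2 := by positivity
  obtain ⟨N, hN⟩ := Metric.tendsto_atTop.mp hb (ε * (1 - q) / 2) hδ
  have hbN : ∀ n ≥ N, b n ≤ ε * (1 - q) / 2 := by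
    intro n hn
    have h := hN n hn
    rw [Real.dist_eq, sub_zero] at h
    exact (abs_lt.mp h).2.le
  have key : ∀ k, a (N + k) ≤ q ^ k * a N + ε / 2 * (1 - q ^ k) := by
    intro k
    induction k with
    | zero => simp
    | succ k ih =>
      have h1 := hrec (N + k)
      have h2 := hbN (N + k) (Nat.le_add_right N k)
      have h3 : q * a (N + k) ≤ q * (q ^ k * a N + ε / 2 * (1 - q ^ k)) :=
        mul_le_mul_of_nonneg_left ih hq0
      have : a (N + (k + 1)) ≤ q * (q ^ k * a N + ε / 2 * (1 - q ^ k)) + ε * (1 - q) / 2 := by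
        have := hrec (N + k)
        calc a (N + (k + 1)) = a ((N + k) + 1) := by ring_nf
          _ ≤ q * a (N + k) + b (N + k) := hrec (N + k)
          _ ≤ q * (q ^ k * a N + ε / 2 * (1 - q ^ k)) + ε * (1 - q) / 2 := by linarith
      calc a (N + (k + 1)) ≤ q * (q ^ k * a N + ε / 2 * (1 - q ^ k)) + ε * (1 - q) / 2 := this
        _ = q ^ (k + 1) * a N + ε / 2 * (1 - q ^ (k + 1)) := by ring
  have key2 : ∀ k, a (N + k) ≤ q ^ k * a N + ε / 2 := by
    intro k
    have hqk : 0 ≤ q ^ k := pow_nonneg hq0 k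
    have := key k
    nlinarith [hε]
  have htend : Tendsto (fun k : ℕ => q ^ k * a N) atTop (𝓝 0) := by
    simpa using (tendsto_pow_atTop_nhds_zero_of_lt_one hq0 hq1).mul_const (a N)
  obtain ⟨K, hK⟩ := Metric.tendsto_atTop.mp htend (ε / 2) (by positivity)
  refine ⟨N + K, fun n hn => ?_⟩
  have hnN : N ≤ n := le_trans (Nat.le_add_right N K) hn
  obtain ⟨k, rfl⟩ := Nat.exists_eq_add_of_le hnN
  have hkK : K ≤ k := by omega
  have h1 := key2 k
  have h2 := hK K (le_refl K)
  rw [Real.dist_eq, sub_zero] at h2 ⊢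
  have hqk : q ^ k ≤ q ^ K := pow_le_pow_of_le_one hq0 hq1.le hkK
  have haN : 0 ≤ a N := ha N
  have h3 : q ^ k * a N ≤ q ^ K * a N := mul_le_mul_of_nonneg_right hqk haN
  have h4 : q ^ K * a N < ε / 2 := by
    have := (abs_lt.mp h2).2
    nlinarith [mul_nonneg (pow_nonneg hq0 K) haN]
  rw [abs_of_nonneg (ha _)]
  linarith

private lemma sol_on_Ico {r : ℝ} {V : ℝ → ℝ} {a b : ℝ} (hab : a < b)
    (hderiv : ∀ t ∈ Ioo a b, HasDerivAt V (r * (1 - V t)) t)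
    (hcont : Tendsto V (𝓝[>] a) (𝓝 (V a))) :
    ∀ t ∈ Ico a b, V t = 1 + (V a - 1) * Real.exp (-(r * (t - a))) := by
  set g : ℝ → ℝ := fun t => (V t - 1) * Real.exp (r * t) with hg
  have hgderiv : ∀ x ∈ Ioo a b, HasDerivAt g 0 x := by
    intro x hx
    have h1 : HasDerivAt (fun t => V t - 1) (r * (1 - V x)) x := (hderiv x hx).sub_const 1
    have h2 : HasDerivAt (fun t => Real.exp (r * t)) (Real.exp (r * x) * r) x := by
      simpa using ((hasDerivAt_id x).const_mul r).exp
    have h3 : HasDerivAt (fun t => (V t - 1) * Real.exp (r * t))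
        (r * (1 - V x) * Real.exp (r * x) + (V x - 1) * (Real.exp (r * x) * r)) x :=
      h1.fun_mul h2
    convert h3 using 1
    ring
  have hgconst : ∀ s ∈ Ioo a b, ∀ t ∈ Ioo a b, s ≤ t → g t = g s := by
    intro s hs t ht hst
    have hcont' : ContinuousOn g (Icc s t) := by
      intro x hx
      have hx' : x ∈ Ioo a b := ⟨lt_of_lt_of_le hs.1 hx.1, lt_of_le_of_lt hx.2 ht.2⟩
      exact (hgderiv x hx').continuousAt.continuousWithinAt
    have hd : ∀ x ∈ Ico s t, HasDerivWithinAt g 0 (Ici x) x := by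
      intro x hx
      have hx' : x ∈ Ioo a b := ⟨lt_of_lt_of_le hs.1 hx.1, lt_of_lt_of_le hx.2 ht.2.le⟩
      exact (hgderiv x hx').hasDerivWithinAt
    exact constant_of_has_deriv_right_zero hcont' hd t (right_mem_Icc.mpr hst)
  have hga : ∀ t ∈ Ioo a b, g t = g a := by
    intro t ht
    have htend : Tendsto g (𝓝[>] a) (𝓝 (g a)) := by
      have h2 : Tendsto (fun s => Real.exp (r * s)) (𝓝[>] a) (𝓝 (Real.exp (r * a))) :=
        ((Real.continuous_exp.comp (continuous_const.mul continuous_id)).tendsto a).mono_left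
          nhdsWithin_le_nhds
      exact (hcont.sub tendsto_const_nhds).mul h2
    have heq : ∀ᶠ s in 𝓝[>] a, g s = g t := by
      filter_upwards [Ioo_mem_nhdsGT_of_mem ⟨le_refl a, ht.1⟩] with s hs
      exact (hgconst s ⟨hs.1, lt_trans hs.2 ht.2⟩ t ht hs.2.le).symm
    have htend2 : Tendsto g (𝓝[>] a) (𝓝 (g t)) := by
      rw [tendsto_congr' heq]; exact tendsto_const_nhds
    exact tendsto_nhds_unique htend2 htend
  intro t ht
  rcases eq_or_lt_of_le ht.1 with heq | hlt
  · subst heq; simp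
  · have h := hga t ⟨hlt, ht.2⟩
    have hmul : Real.exp (-(r * (t - a))) * Real.exp (r * t) = Real.exp (r * a) := by
      rw [← Real.exp_add]; ring_nf
    have key : V t * Real.exp (r * t) =
        (1 + (V a - 1) * Real.exp (-(r * (t - a)))) * Real.exp (r * t) := by
      have h2 : (1 + (V a - 1) * Real.exp (-(r * (t - a)))) * Real.exp (r * t) =
          Real.exp (r * t) + (V a - 1) * (Real.exp (-(r * (t - a))) * Real.exp (r * t)) := by
        ring
      rw [h2, hmul]
      have hgt : (V t - 1) * Real.exp (r * t) = (V a - 1) * Real.exp (r * a) := h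
      nlinarith [hgt]
    exact mul_right_cancel₀ (Real.exp_ne_zero _) key

set_option maxHeartbeats 1000000 in
theorem vegetation_converges_to_periodic
    (r τ : ℝ) (hr : 0 < r) (hτ : 0 < τ)
    (γ : ℝ → ℝ) (hγmem : ∀ t, 0 ≤ t → γ t ∈ Icc (0 : ℝ) 1)
    (γstar : ℝ) (hγstar : γstar ∈ Ioc (0 : ℝ) 1)
    (hγlim : Tendsto (fun n : ℕ => γ ((n : ℝ) * τ)) atTop (𝓝 γstar))
    (V₀ : ℝ) (hV₀ : V₀ ∈ Icc (0 : ℝ) 1)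
    (V : ℝ → ℝ) (hV : IsImpulsiveVegSol r τ γ V₀ V) :
    ∀ ε > 0, ∃ N : ℕ, ∀ n ≥ N, ∀ t ∈ Ico ((n : ℝ) * τ) ((n + 1 : ℝ) * τ),
      |V t - Vper r τ γstar t| < ε := by
  obtain ⟨hV0, hVc0, hVderiv, hVjump, hVmem⟩ := hV
  set q : ℝ := Real.exp (-(r * τ)) with hq_def
  have hq0 : 0 < q := Real.exp_pos _
  have hq1 : q < 1 := by
    rw [hq_def, Real.exp_lt_one_iff]
    nlinarith
  -- explicit solution on each interval
  have hsol : ∀ n : ℕ, ∀ t ∈ Ico ((n : ℝ) * τ) ((n + 1 : ℝ) * τ),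
      V t = 1 + (V ((n : ℝ) * τ) - 1) * Real.exp (-(r * (t - (n : ℝ) * τ))) := by
    intro n
    have hab : (n : ℝ) * τ < (n + 1 : ℝ) * τ := by nlinarith
    refine sol_on_Ico hab (hVderiv n) ?_
    rcases Nat.eq_zero_or_pos n with hn0 | hn1
    · subst hn0
      simp only [Nat.cast_zero, zero_mul]
      exact hVc0.mono_left (nhdsWithin_mono _ Ioi_subset_Ici_self)
    · exact (hVjump n hn1).1
  -- value at the left limit / jump recursion
  have hleft : ∀ n : ℕ, V (((n : ℝ) + 1) * τ) =
      (1 - γ (((n : ℝ) + 1) * τ)) * (1 + (V ((n : ℝ) * τ) - 1) * q) := by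
    intro n
    obtain ⟨_, Lm, hLm, hjump⟩ := hVjump (n + 1) (Nat.le_add_left 1 n)
    have hcast : (((n + 1 : ℕ) : ℝ)) = (n : ℝ) + 1 := by push_cast; ring
    rw [hcast] at hLm hjump
    have hab : (n : ℝ) * τ < ((n : ℝ) + 1) * τ := by nlinarith
    have hLm2 : Tendsto V (𝓝[<] (((n : ℝ) + 1) * τ))
        (𝓝 (1 + (V ((n : ℝ) * τ) - 1) * q)) := by
      have hf : Tendsto (fun t => 1 + (V ((n : ℝ) * τ) - 1) * Real.exp (-(r * (t - (n : ℝ) * τ))))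
          (𝓝[<] (((n : ℝ) + 1) * τ)) (𝓝 (1 + (V ((n : ℝ) * τ) - 1) * q)) := by
        have hc : Continuous (fun t : ℝ => 1 + (V ((n : ℝ) * τ) - 1) *
            Real.exp (-(r * (t - (n : ℝ) * τ)))) := by continuity
        have := (hc.tendsto (((n : ℝ) + 1) * τ)).mono_left
          (nhdsWithin_le_nhds (s := Iio (((n : ℝ) + 1) * τ)))
        convert this using 2
        rw [hq_def]
        ring_nf
      have heq : ∀ᶠ t in 𝓝[<] (((n : ℝ) + 1) * τ),
          (fun t => 1 + (V ((n : ℝ) * τ) - 1) * Real.exp (-(r * (t - (n : ℝ) * τ)))) t = V t := by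
        filter_upwards [Ioo_mem_nhdsLT_of_mem ⟨hab, le_refl _⟩] with s hs
        exact (hsol n s ⟨hs.1.le, hs.2⟩).symm
      exact Tendsto.congr' heq hf
    have : Lm = 1 + (V ((n : ℝ) * τ) - 1) * q := tendsto_nhds_unique hLm hLm2
    rw [hjump, this]
  -- recursion for u n = 1 - V(nτ)
  have hD : 0 < 1 - (1 - γstar) * q := by
    have h1 : 0 ≤ 1 - γstar := by linarith [hγstar.2]
    nlinarith [hγstar.1]
  set ustar : ℝ := γstar / (1 - (1 - γstar) * q) with hustar_def
  have hustar : ustar * (1 - (1 - γstar) * q) = γstar := div_mul_cancel₀ _ (ne_of_gt hD)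
  set a : ℕ → ℝ := fun n => |(1 - V ((n : ℝ) * τ)) - ustar| with ha_def
  set b : ℕ → ℝ := fun n => |γ (((n : ℝ) + 1) * τ) - γstar| * |1 - q * ustar| with hb_def
  have hrec : ∀ n, a (n + 1) ≤ q * a n + b n := by
    intro n
    have hcast : (((n + 1 : ℕ) : ℝ)) = (n : ℝ) + 1 := by push_cast; ring
    have hγn1 : γ (((n : ℝ) + 1) * τ) ∈ Icc (0 : ℝ) 1 := hγmem _ (by positivity)
    have hkey : (1 - V (((n : ℝ) + 1) * τ)) - ustar =
        (1 - γ (((n : ℝ) + 1) * τ)) * q * ((1 - V ((n : ℝ) * τ)) - ustar) +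
        (γ (((n : ℝ) + 1) * τ) - γstar) * (1 - q * ustar) := by
      rw [hleft n]
      linear_combination -hustar
    have h1 : a (n + 1) = |(1 - V (((n : ℝ) + 1) * τ)) - ustar| := by
      rw [ha_def]; simp only [hcast]
    rw [h1, hkey]
    calc |(1 - γ (((n : ℝ) + 1) * τ)) * q * ((1 - V ((n : ℝ) * τ)) - ustar) +
          (γ (((n : ℝ) + 1) * τ) - γstar) * (1 - q * ustar)|
        ≤ |(1 - γ (((n : ℝ) + 1) * τ)) * q * ((1 - V ((n : ℝ) * τ)) - ustar)| +
          |(γ (((n : ℝ) + 1) * τ) - γstar) * (1 - q * ustar)| := abs_add_le _ _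
      _ ≤ q * a n + b n := by
          rw [abs_mul, abs_mul, abs_mul]
          have h2 : |1 - γ (((n : ℝ) + 1) * τ)| ≤ 1 := by
            rw [abs_le]; constructor <;> [linarith [hγn1.2]; linarith [hγn1.1]]
          have h3 : |q| = q := abs_of_pos hq0
          have h4 : (0:ℝ) ≤ |(1 - V ((n : ℝ) * τ)) - ustar| := abs_nonneg _
          rw [h3]
          have : |1 - γ (((n : ℝ) + 1) * τ)| * q * |(1 - V ((n : ℝ) * τ)) - ustar|
              ≤ 1 * q * |(1 - V ((n : ℝ) * τ)) - ustar| := by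
            apply mul_le_mul_of_nonneg_right _ h4
            exact mul_le_mul_of_nonneg_right h2 hq0.le
          simp only [ha_def, hb_def]
          linarith
  have hbtend : Tendsto b atTop (𝓝 0) := by
    have h1 : Tendsto (fun n : ℕ => γ (((n : ℝ) + 1) * τ)) atTop (𝓝 γstar) := by
      have h := hγlim.comp (tendsto_add_atTop_nat 1)
      refine h.congr fun n => ?_
      simp only [Function.comp_apply]
      norm_cast
    have h1' : Tendsto (fun n : ℕ => γ (((n : ℝ) + 1) * τ) - γstar) atTop (𝓝 (γstar - γstar)) :=
      h1.sub (tendsto_const_nhds (x := γstar))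
    have h2 := (h1'.abs).mul_const |1 - q * ustar|
    simpa [hb_def] using h2
  have hconv : Tendsto a atTop (𝓝 0) :=
    geom_rec_tendsto_zero hq0.le hq1 (fun n => abs_nonneg _) hrec hbtend
  -- conclusion
  intro ε hε
  obtain ⟨N, hN⟩ := Metric.tendsto_atTop.mp hconv ε hε
  refine ⟨N, fun n hn t ht => ?_⟩
  have han : a n < ε := by
    have := hN n hn
    rw [Real.dist_eq, sub_zero, abs_of_nonneg (abs_nonneg _)] at this
    exact this
  have hfl : ⌊t / τ⌋ = (n : ℤ) := by
    rw [Int.floor_eq_iff]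
    constructor
    · push_cast
      rw [le_div_iff₀ hτ]
      exact ht.1
    · push_cast
      rw [div_lt_iff₀ hτ]
      exact ht.2
  have hVper : Vper r τ γstar t =
      1 - γstar * Real.exp (-(r * (t - (n : ℝ) * τ))) / (1 - (1 - γstar) * q) := by
    simp only [Vper]
    rw [hfl, hq_def]
    push_cast
    ring_nf
  have hVt := hsol n t ht
  have he1 : Real.exp (-(r * (t - (n : ℝ) * τ))) ≤ 1 := by
    rw [Real.exp_le_one_iff]
    have h0 : 0 ≤ t - (n : ℝ) * τ := by linarith [ht.1]
    have := mul_nonneg hr.le h0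
    linarith
  have he0 : 0 < Real.exp (-(r * (t - (n : ℝ) * τ))) := Real.exp_pos _
  have hdiff : V t - Vper r τ γstar t =
      (ustar - (1 - V ((n : ℝ) * τ))) * Real.exp (-(r * (t - (n : ℝ) * τ))) := by
    rw [hVt, hVper, hustar_def]
    field_simp
    ring
  rw [hdiff, abs_mul, abs_of_pos he0]
  have h5 : |ustar - (1 - V ((n : ℝ) * τ))| = a n := by
    rw [ha_def]; exact abs_sub_comm _ _
  rw [h5]
  calc a n * Real.exp (-(r * (t - (n : ℝ) * τ))) ≤ a n * 1 :=
        mul_le_mul_of_nonneg_left he1 (abs_nonneg _)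
    _ < ε := by rw [mul_one]; exact han
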